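/- arXiv:2502.14783 — 2 statements merged into one kernel-verified Lean document; each statement's English description precedes it below -/
import Mathlib

section
/- Let 0 < q < 1, 0 < q1 ≤ 1, and v_th ≥ 1 a natural number. Define p2 = q·q1 / (2q1 − 2q1(1−q)^{v_th} + q(1−q)^{v_th}), p_{k+2} = p2(1−q)^k for k = 0, ..., v_th−1 (so that p_{v_th+1} = p2(1−q)^{v_th−1}), p1 = (1−q)·p_{v_th+1}/q1, and p0 = (p2 − q1·p1)/q. Then all components of the vector (p0, p1, p2, p3, ..., p_{v_th+1}) are nonnegative and they sum to 1. -/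
/-- Stationary distribution of the Markov chain induced by the threshold-`v_th` sampling
policy: with `p2 = q*q1 / (2*q1 - 2*q1*(1-q)^v_th + q*(1-q)^v_th)`, set
`p (k+2) = p2*(1-q)^k` for `0 ≤ k ≤ v_th - 1`, `p 1 = (1-q)*p (v_th+1)/q1`, and
`p 0 = (p 2 - q1 * p 1)/q`.  All components are nonnegative and they sum to `1`. -/
theorem stationary_distribution_threshold (q q1 : ℝ) (hq0 : 0 < q) (hq1 : q < 1)
    (hq10 : 0 < q1) (hq11 : q1 ≤ 1) (v_th : ℕ) (hv : 1 ≤ v_th)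
    (p2 : ℝ) (hp2 : p2 = q * q1 / (2 * q1 - 2 * q1 * (1 - q) ^ v_th + q * (1 - q) ^ v_th))
    (p : ℕ → ℝ)
    (hstates : ∀ k : ℕ, k ≤ v_th - 1 → p (k + 2) = p2 * (1 - q) ^ k)
    (hp1 : p 1 = (1 - q) * p (v_th + 1) / q1)
    (hp0 : p 0 = (p 2 - q1 * p 1) / q) :
    (∀ j : ℕ, j ≤ v_th + 1 → 0 ≤ p j) ∧
    ∑ j ∈ Finset.range (v_th + 2), p j = 1 := by
  have hx0 : (0:ℝ) < 1 - q := by linarith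
  have hx1 : (1:ℝ) - q < 1 := by linarith
  have hxv1 : (1 - q) ^ v_th < 1 := pow_lt_one₀ hx0.le hx1 (by omega)
  have hxv0 : (0:ℝ) < (1 - q) ^ v_th := pow_pos hx0 _
  have hD : (0:ℝ) < 2 * q1 - 2 * q1 * (1 - q) ^ v_th + q * (1 - q) ^ v_th := by nlinarith
  have hp2pos : 0 < p2 := by rw [hp2]; exact div_pos (by positivity) hD
  have hpv : p (v_th + 1) = p2 * (1 - q) ^ (v_th - 1) := by
    have h := hstates (v_th - 1) le_rfl
    have h2 : v_th - 1 + 2 = v_th + 1 := by omega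
    rwa [h2] at h
  have hxx : (1 - q) * (1 - q) ^ (v_th - 1) = (1 - q) ^ v_th := by
    conv_rhs => rw [show v_th = (v_th - 1) + 1 by omega, pow_succ]
    ring
  have hp1' : p 1 = p2 * (1 - q) ^ v_th / q1 := by
    rw [hp1, hpv, ← hxx]; ring
  have hp2' : p 2 = p2 := by simpa using hstates 0 (by omega)
  have hp0' : p 0 = p2 * (1 - (1 - q) ^ v_th) / q := by
    rw [hp0, hp2', hp1']; field_simp
  constructor
  · intro j hj
    match j with
    | 0 => rw [hp0']; exact div_nonneg (mul_nonneg hp2pos.le (by linarith)) hq0.le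
    | 1 => rw [hp1']; exact div_nonneg (by positivity) hq10.le
    | (k+2) =>
      rw [hstates k (by omega)]; positivity
  · rw [Finset.sum_range_succ', Finset.sum_range_succ']
    have hsum : ∑ j ∈ Finset.range v_th, p (j + 1 + 1)
        = p2 * ∑ j ∈ Finset.range v_th, (1 - q) ^ j := by
      rw [Finset.mul_sum]
      refine Finset.sum_congr rfl fun k hk => ?_
      have hk' : k < v_th := Finset.mem_range.mp hk
      exact hstates k (by omega)
    have hgeom : ∑ j ∈ Finset.range v_th, (1 - q) ^ j = (1 - (1 - q) ^ v_th) / q := by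
      rw [geom_sum_eq (by intro h; linarith : (1:ℝ) - q ≠ 1),
        div_eq_div_iff (by intro h; rw [sub_eq_zero] at h; linarith) hq0.ne']
      ring
    rw [hsum, hgeom]
    rw [show (0:ℕ) + 1 = 1 from rfl, hp1', hp0', hp2]
    field_simp [hD.ne']
    rw [div_eq_one_iff_eq (ne_of_gt (by nlinarith))]
    ring
end

section
/- Let S > 0, p > 0, and 0 < q < 1. If f : ℝ≥0 → ℝ is increasing and concave with left derivative bounded below by S everywhere, and v ≥ p·q/(S(1−q)), then p·q ≤ (1−q)·(f(v+1) − f(1)). -/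
theorem sufficient_condition_key_ineq (S p q v : ℝ) (hS : 0 < S) (hp : 0 < p)
    (hq0 : 0 < q) (hq1 : q < 1) (f d : ℝ → ℝ)
    (hmono : MonotoneOn f (Set.Ici 0)) (hconc : ConcaveOn ℝ (Set.Ici 0) f)
    (hderiv : ∀ x : ℝ, 0 < x → HasDerivWithinAt f (d x) (Set.Iio x) x)
    (hdS : ∀ x : ℝ, 0 < x → S ≤ d x)
    (hv0 : 0 ≤ v) (hv : p * q / (S * (1 - q)) ≤ v) :
    p * q ≤ (1 - q) * (f (v + 1) - f 1) := by
  have hq1' : 0 < 1 - q := by linarith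
  have hSq : 0 < S * (1 - q) := mul_pos hS hq1'
  have hv' : p * q ≤ S * (1 - q) * v := by
    rw [div_le_iff₀ hSq] at hv; linarith
  -- key: S * v ≤ f (v+1) - f 1
  have key : S * v ≤ f (v + 1) - f 1 := by
    rcases eq_or_lt_of_le hv0 with h0 | h0
    · simp [← h0]
    · set z := v + 1 with hz
      have hz1 : (1:ℝ) < z := by simp [hz]; linarith
      have hz0 : (0:ℝ) < z := by linarith
      have hd := hderiv z hz0
      have hzs : z ∉ Set.Iio z := by simp
      have htend : Filter.Tendsto (slope f z) (nhdsWithin z (Set.Iio z)) (nhds (d z)) :=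
        (hasDerivWithinAt_iff_tendsto_slope' hzs).mp hd
      have hconv : ConvexOn ℝ (Set.Ici 0) (-f) := hconc.neg
      have hslope : d z ≤ (f z - f 1) / (z - 1) := by
        refine le_of_tendsto htend ?_
        filter_upwards [Ioo_mem_nhdsLT_of_mem (Set.mem_Ioc.mpr ⟨hz1, le_refl z⟩)] with t ht
        obtain ⟨ht1, htz⟩ := ht
        have h1 : (1:ℝ) ∈ Set.Ici (0:ℝ) := by norm_num
        have hzmem : z ∈ Set.Ici (0:ℝ) := le_of_lt hz0
        have := hconv.secant_mono_aux3 h1 hzmem ht1 htz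
        simp only [Pi.neg_apply] at this
        have heq : slope f z t = (f z - f t) / (z - t) := by
          rw [slope_def_field]; rw [div_eq_div_iff (by linarith) (by linarith)]; ring
        rw [heq]
        have h2 : (-f z - -f 1) / (z - 1) ≤ (-f z - -f t) / (z - t) := this
        have h3 : (f z - f t) / (z - t) ≤ (f z - f 1) / (z - 1) := by
          rw [div_le_div_iff₀ (by linarith) (by linarith)] at h2 ⊢
          nlinarith
        exact h3
      have hSz : S ≤ (f z - f 1) / (z - 1) := le_trans (hdS z hz0) hslope
      have : S * (z - 1) ≤ f z - f 1 := by
        rw [← le_div_iff₀ (by linarith)]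
        exact hSz
      have hz1' : z - 1 = v := by simp [hz]
      rw [hz1'] at this
      exact this
  nlinarith
end
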